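/- arXiv:2303.08563 — 4 statements merged into one kernel-verified Lean document; each statement's English description precedes it below -/
import Mathlib

section
/- Let n0, n1 ≥ 1 and g ≥ 2 be integers, set n := n0 + n1, and let δ be any integer. Set D1 := (n0² + n1² − n0·n1)·(g−1) + 1 + δ and D2 := 3·n0·n1·(g−1) − δ, and define the element m(t) := (1−t)^g · ∏_{i=2}^{n} (1−t^i)^{(2i−1)(g−1)} · (1−t)^{−(D1+D2)} · (1+t)^{−D2} of the field of rational functions ℚ(t) (using integer powers). Then m(t) = (1+t)^{e} · p_{n,g}(t), where e := (2⌊n/2⌋² + ⌊n/2⌋)·(g−1) + δ − 3·n0·n1·(g−1) ∈ ℤ and p_{n,g}(X) := ∏_{3 ≤ m ≤ n, m odd} (∑_{j=0}^{m−1} X^j)^{(2m−1)(g−1)} · ∏_{2 ≤ m ≤ n, m even} (∑_{k=0}^{m/2−1} X^{2k})^{(2m−1)(g−1)} ∈ ℤ[X]. -/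
open RatFunc


lemma sumA (n : ℕ) : ∑ i ∈ Finset.Icc 2 n, (2 * i - 1) = n ^ 2 - 1 := by
  induction n with
  | zero => simp
  | succ n ih =>
    rcases Nat.eq_zero_or_pos n with h | h
    · subst h; rw [show Finset.Icc 2 1 = ∅ from rfl]; simp
    · rw [Finset.sum_Icc_succ_top (by omega), ih]
      have h2 : (n + 1) ^ 2 = n ^ 2 + 2 * n + 1 := by ring
      have h3 : 1 ≤ n ^ 2 := Nat.one_le_pow _ _ h
      omega

lemma sumK (m : ℕ) : ∑ k ∈ Finset.Icc 1 m, (2 * (2 * k) - 1) = 2 * m ^ 2 + m := by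
  induction m with
  | zero => simp
  | succ m ih =>
    rw [Finset.sum_Icc_succ_top (by omega), ih]
    have h2 : (m + 1) ^ 2 = m ^ 2 + 2 * m + 1 := by ring
    omega

lemma sumB (n : ℕ) :
    ∑ i ∈ (Finset.Icc 2 n).filter (fun i => Even i), (2 * i - 1)
      = 2 * (n / 2) ^ 2 + n / 2 := by
  rw [← sumK (n / 2)]
  refine Finset.sum_bij' (fun i _ => i / 2) (fun k _ => 2 * k) ?_ ?_ ?_ ?_ ?_
  · intro a ha
    simp only [Finset.mem_filter, Finset.mem_Icc] at ha
    obtain ⟨⟨h1, h2⟩, h3⟩ := ha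
    rw [Nat.even_iff] at h3
    simp only [Finset.mem_Icc]
    omega
  · intro k hk
    simp only [Finset.mem_Icc] at hk
    simp only [Finset.mem_filter, Finset.mem_Icc]
    exact ⟨⟨by omega, by omega⟩, even_two_mul k⟩
  · intro a ha
    simp only [Finset.mem_filter, Finset.mem_Icc] at ha
    rw [Nat.even_iff] at ha
    omega
  · intro k hk; omega
  · intro a ha
    simp only [Finset.mem_filter, Finset.mem_Icc] at ha
    rw [Nat.even_iff] at ha
    omega

/-- the virtual equivariant multiplicity of a type (n0,n1) fixed point
with invariant δ equals (1+t)^e times the cyclotomic-type polynomial p_{n,g}(t). -/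
theorem stmt5 (n0 n1 g : ℕ) (hn0 : 1 ≤ n0) (hn1 : 1 ≤ n1) (hg : 2 ≤ g)
    (δ : ℤ) (n : ℕ) (hn : n = n0 + n1)
    (D1 D2 : ℤ)
    (hD1 : D1 = ((n0 : ℤ) ^ 2 + (n1 : ℤ) ^ 2 - n0 * n1) * ((g : ℤ) - 1) + 1 + δ)
    (hD2 : D2 = 3 * (n0 : ℤ) * n1 * ((g : ℤ) - 1) - δ)
    (m : RatFunc ℚ)
    (hm : m = ((1 : RatFunc ℚ) - RatFunc.X) ^ (g : ℤ) *
        (∏ i ∈ Finset.Icc 2 n,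
          ((1 : RatFunc ℚ) - RatFunc.X ^ i) ^ (((2 * i - 1) * (g - 1) : ℕ) : ℤ)) *
        ((1 : RatFunc ℚ) - RatFunc.X) ^ (-(D1 + D2)) *
        ((1 : RatFunc ℚ) + RatFunc.X) ^ (-D2))
    (e : ℤ)
    (he : e = ((2 * (n / 2) ^ 2 + n / 2 : ℕ) : ℤ) * ((g : ℤ) - 1) + δ -
        3 * (n0 : ℤ) * n1 * ((g : ℤ) - 1)) :
    m = ((1 : RatFunc ℚ) + RatFunc.X) ^ e *
        ((∏ k ∈ (Finset.Icc 3 n).filter (fun k => Odd k),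
            (∑ j ∈ Finset.range k, RatFunc.X ^ j) ^ ((2 * k - 1) * (g - 1))) *
          (∏ k ∈ (Finset.Icc 2 n).filter (fun k => Even k),
            (∑ j ∈ Finset.range (k / 2), RatFunc.X ^ (2 * j)) ^ ((2 * k - 1) * (g - 1)))) := by
  have hg1 : 1 ≤ g := by omega
  -- nonvanishing of 1 ± X
  have hX1 : (1 : RatFunc ℚ) - RatFunc.X ≠ 0 := by
    have h0 : ((1 : Polynomial ℚ) - Polynomial.X) ≠ 0 := by
      intro h
      have := congrArg (fun p => Polynomial.coeff p 1) h
      simp [Polynomial.coeff_one] at this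
    have h2 := RatFunc.algebraMap_ne_zero (K := ℚ) h0
    rwa [map_sub, map_one, RatFunc.algebraMap_X] at h2
  have hX2 : (1 : RatFunc ℚ) + RatFunc.X ≠ 0 := by
    have h0 : ((1 : Polynomial ℚ) + Polynomial.X) ≠ 0 := by
      intro h
      have := congrArg (fun p => Polynomial.coeff p 1) h
      simp [Polynomial.coeff_one] at this
    have h2 := RatFunc.algebraMap_ne_zero (K := ℚ) h0
    rwa [map_add, map_one, RatFunc.algebraMap_X] at h2
  -- pointwise factorizations
  have hodd : ∀ i : ℕ, (1 : RatFunc ℚ) - RatFunc.X ^ i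
      = (1 - RatFunc.X) * ∑ j ∈ Finset.range i, RatFunc.X ^ j := by
    intro i
    have h := geom_sum_mul (RatFunc.X : RatFunc ℚ) i
    linear_combination h
  have heven : ∀ i : ℕ, Even i → (1 : RatFunc ℚ) - RatFunc.X ^ i
      = (1 - RatFunc.X) * ((1 + RatFunc.X) *
          ∑ j ∈ Finset.range (i / 2), RatFunc.X ^ (2 * j)) := by
    intro i hi
    obtain ⟨k, hk⟩ := hi
    have hi2 : i = 2 * k := by omega
    subst hi2
    rw [show 2 * k / 2 = k from by omega]
    have h := geom_sum_mul ((RatFunc.X : RatFunc ℚ) ^ 2) k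
    have hsum : ∑ j ∈ Finset.range k, (RatFunc.X : RatFunc ℚ) ^ (2 * j)
        = ∑ j ∈ Finset.range k, ((RatFunc.X : RatFunc ℚ) ^ 2) ^ j := by
      refine Finset.sum_congr rfl fun j _ => ?_
      rw [pow_mul]
    rw [hsum, pow_mul]
    linear_combination h
  -- factor the big product
  set Podd : RatFunc ℚ := ∏ k ∈ (Finset.Icc 2 n).filter (fun i => ¬ Even i),
      (∑ j ∈ Finset.range k, RatFunc.X ^ j) ^ ((2 * k - 1) * (g - 1)) with hPodd
  set Peven : RatFunc ℚ := ∏ k ∈ (Finset.Icc 2 n).filter (fun k => Even k),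
      (∑ j ∈ Finset.range (k / 2), RatFunc.X ^ (2 * j)) ^ ((2 * k - 1) * (g - 1)) with hPeven
  have hprod : ∏ i ∈ Finset.Icc 2 n,
        ((1 : RatFunc ℚ) - RatFunc.X ^ i) ^ ((2 * i - 1) * (g - 1))
      = (1 - RatFunc.X) ^ (∑ i ∈ Finset.Icc 2 n, (2 * i - 1) * (g - 1)) *
        ((1 + RatFunc.X) ^
            (∑ i ∈ (Finset.Icc 2 n).filter (fun i => Even i), (2 * i - 1) * (g - 1)) *
          (Podd * Peven)) := by
    rw [← Finset.prod_filter_mul_prod_filter_not (Finset.Icc 2 n) (fun i => Even i),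
        ← Finset.sum_filter_add_sum_filter_not (Finset.Icc 2 n) (fun i => Even i)]
    have h1 : ∏ i ∈ (Finset.Icc 2 n).filter (fun i => Even i),
          ((1 : RatFunc ℚ) - RatFunc.X ^ i) ^ ((2 * i - 1) * (g - 1))
        = (1 - RatFunc.X) ^
              (∑ i ∈ (Finset.Icc 2 n).filter (fun i => Even i), (2 * i - 1) * (g - 1)) *
            ((1 + RatFunc.X) ^
              (∑ i ∈ (Finset.Icc 2 n).filter (fun i => Even i), (2 * i - 1) * (g - 1)) *
            Peven) := by
      rw [hPeven, ← Finset.prod_pow_eq_pow_sum, ← Finset.prod_pow_eq_pow_sum,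
          ← Finset.prod_mul_distrib, ← Finset.prod_mul_distrib]
      refine Finset.prod_congr rfl fun i hi => ?_
      rw [Finset.mem_filter] at hi
      rw [heven i hi.2, mul_pow, mul_pow]
    have h2 : ∏ i ∈ (Finset.Icc 2 n).filter (fun i => ¬ Even i),
          ((1 : RatFunc ℚ) - RatFunc.X ^ i) ^ ((2 * i - 1) * (g - 1))
        = (1 - RatFunc.X) ^
              (∑ i ∈ (Finset.Icc 2 n).filter (fun i => ¬ Even i), (2 * i - 1) * (g - 1)) *
            Podd := by
      rw [hPodd, ← Finset.prod_pow_eq_pow_sum, ← Finset.prod_mul_distrib]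
      refine Finset.prod_congr rfl fun i _ => ?_
      rw [hodd i, mul_pow]
    rw [h1, h2, pow_add]
    ring
  -- values of the exponent sums
  have hAval : ∑ i ∈ Finset.Icc 2 n, (2 * i - 1) * (g - 1) = (n ^ 2 - 1) * (g - 1) := by
    rw [← Finset.sum_mul, sumA]
  have hBval : ∑ i ∈ (Finset.Icc 2 n).filter (fun i => Even i), (2 * i - 1) * (g - 1)
      = (2 * (n / 2) ^ 2 + n / 2) * (g - 1) := by
    rw [← Finset.sum_mul, sumB]
  -- exponent arithmetic
  have hn2sq : 1 ≤ n ^ 2 := Nat.one_le_pow _ _ (by omega)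
  have hA' : (g : ℤ) + (((n ^ 2 - 1) * (g - 1) : ℕ) : ℤ) + -(D1 + D2) = 0 := by
    rw [hD1, hD2]
    push_cast [Nat.cast_sub hn2sq, Nat.cast_sub hg1]
    subst hn
    push_cast
    ring
  have hB' : ((((2 * (n / 2) ^ 2 + n / 2) * (g - 1) : ℕ)) : ℤ) + -D2 = e := by
    rw [hD2, he]
    push_cast [Nat.cast_sub hg1]
    ring
  -- matching of index sets for the odd product
  have hset : (Finset.Icc 2 n).filter (fun i => ¬ Even i)
      = (Finset.Icc 3 n).filter (fun k => Odd k) := by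
    ext i
    simp only [Finset.mem_filter, Finset.mem_Icc, Nat.odd_iff, Nat.even_iff]
    omega
  -- put everything together
  rw [hm]
  simp only [zpow_natCast]
  rw [hprod, hAval, hBval]
  rw [← zpow_natCast ((1 : RatFunc ℚ) - RatFunc.X) g,
      ← zpow_natCast ((1 : RatFunc ℚ) - RatFunc.X) ((n ^ 2 - 1) * (g - 1)),
      ← zpow_natCast ((1 : RatFunc ℚ) + RatFunc.X) ((2 * (n / 2) ^ 2 + n / 2) * (g - 1))]
  have hre : ((1 : RatFunc ℚ) - RatFunc.X) ^ (g : ℤ) *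
        (((1 : RatFunc ℚ) - RatFunc.X) ^ ((((n ^ 2 - 1) * (g - 1) : ℕ)) : ℤ) *
          (((1 : RatFunc ℚ) + RatFunc.X) ^ ((((2 * (n / 2) ^ 2 + n / 2) * (g - 1) : ℕ)) : ℤ) *
            (Podd * Peven))) *
        ((1 : RatFunc ℚ) - RatFunc.X) ^ (-(D1 + D2)) *
        ((1 : RatFunc ℚ) + RatFunc.X) ^ (-D2)
      = (((1 : RatFunc ℚ) - RatFunc.X) ^ (g : ℤ) *
          ((1 : RatFunc ℚ) - RatFunc.X) ^ ((((n ^ 2 - 1) * (g - 1) : ℕ)) : ℤ) *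
          ((1 : RatFunc ℚ) - RatFunc.X) ^ (-(D1 + D2))) *
        ((((1 : RatFunc ℚ) + RatFunc.X) ^ ((((2 * (n / 2) ^ 2 + n / 2) * (g - 1) : ℕ)) : ℤ) *
          ((1 : RatFunc ℚ) + RatFunc.X) ^ (-D2)) * (Podd * Peven)) := by
    ring
  rw [hre, ← zpow_add₀ hX1, ← zpow_add₀ hX1, ← zpow_add₀ hX2, hA', hB', zpow_zero, one_mul,
      hPodd, hPeven, hset]
end

section
/- Let n0 ≥ n1 ≥ 1 and g ≥ 2 be integers, set n := n0 + n1, and let δ be an integer with n1·(n0−n1)·(g−1) ≤ δ ≤ 2·n0·n1·(g−1). With D1 := (n0² + n1² − n0·n1)·(g−1) + 1 + δ and D2 := 3·n0·n1·(g−1) − δ, define m(t) := (1−t)^g · ∏_{i=2}^{n} (1−t^i)^{(2i−1)(g−1)} · (1−t)^{−(D1+D2)} · (1+t)^{−D2} in the field ℚ(t). Then m(t) lies in the image of the polynomial ring ℚ[t] in ℚ(t) if and only if δ ≥ (3·n0·n1 − 2·⌊n/2⌋² − ⌊n/2⌋)·(g−1); equivalently, m(t) is not a polynomial if and only if δ <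 (3·n0·n1 − 2·⌊n/2⌋² − ⌊n/2⌋)·(g−1). -/
open RatFunc

lemma aux_sum1 (n : ℕ) : ∑ i ∈ Finset.Icc 2 n, (2*i - 1) = n^2 - 1 := by
  induction n with
  | zero => simp
  | succ n ih =>
    rcases Nat.lt_or_ge n 1 with h | h
    · obtain rfl : n = 0 := by omega
      simp [show Finset.Icc 2 1 = (∅ : Finset ℕ) from rfl]
    · rw [Finset.sum_Icc_succ_top (by omega), ih]
      have hsq : (n+1)^2 = n^2 + 2*n + 1 := by ring
      have h2 : 1 ≤ n^2 := Nat.one_le_pow _ _ (by omega)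
      omega

lemma aux_sum2 (n : ℕ) :
    ∑ i ∈ Finset.Icc 2 n, (if Even i then 2*i - 1 else 0) = 2*(n/2)^2 + n/2 := by
  induction n with
  | zero => simp
  | succ n ih =>
    rcases Nat.lt_or_ge n 1 with h | h
    · obtain rfl : n = 0 := by omega
      simp [show Finset.Icc 2 1 = (∅ : Finset ℕ) from rfl]
    · rw [Finset.sum_Icc_succ_top (by omega), ih]
      rcases Nat.even_or_odd (n+1) with he | ho
      · rw [if_pos he]
        obtain ⟨m, hm⟩ := he
        obtain ⟨m', rfl⟩ : ∃ m', m = m' + 1 := ⟨m - 1, by omega⟩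
        have h1 : n/2 = m' := by omega
        have h2 : (n+1)/2 = m' + 1 := by omega
        have e1 : (m'+1)^2 = m'^2 + 2*m' + 1 := by ring
        rw [h1, h2]
        omega
      · rw [if_neg (by simpa using Nat.not_even_iff_odd.mpr ho)]
        have hmod : n % 2 = 0 := by have := Nat.odd_iff.mp ho; omega
        have h1 : n/2 = (n+1)/2 := by omega
        rw [h1]
        omega

noncomputable def sPoly (i : ℕ) : Polynomial ℚ :=
  if Even i then ∑ j ∈ Finset.range (i/2), (Polynomial.X^2)^j
  else ∑ j ∈ Finset.range i, Polynomial.X^j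

lemma sPoly_factor (i : ℕ) :
    (1 : Polynomial ℚ) - Polynomial.X ^ i
      = (1 - Polynomial.X) * (1 + Polynomial.X) ^ (if Even i then 1 else 0) * sPoly i := by
  rcases Nat.even_or_odd i with he | ho
  · obtain ⟨m, hm⟩ := id he
    simp only [sPoly, if_pos he]
    have hd : i / 2 = m := by omega
    have hx : (Polynomial.X : Polynomial ℚ)^i = (Polynomial.X^2)^m := by
      rw [← pow_mul]; congr 1; omega
    rw [hd, hx, pow_one]
    linear_combination geom_sum_mul (Polynomial.X^2 : Polynomial ℚ) m
  · simp only [sPoly, if_neg (Nat.not_even_iff_odd.mpr ho), pow_zero]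
    linear_combination geom_sum_mul (Polynomial.X : Polynomial ℚ) i

lemma sPoly_eval (i : ℕ) (hi : 2 ≤ i) : (sPoly i).eval (-1) ≠ 0 := by
  rcases Nat.even_or_odd i with he | ho
  · have hv : (sPoly i).eval (-1) = ((i/2 : ℕ) : ℚ) := by
      simp [sPoly, if_pos he, Polynomial.eval_finset_sum]
    rw [hv]
    have : i/2 ≠ 0 := by omega
    exact_mod_cast Nat.cast_ne_zero.mpr this
  · have hv : (sPoly i).eval (-1) = 1 := by
      simp only [sPoly, if_neg (Nat.not_even_iff_odd.mpr ho), Polynomial.eval_finset_sum,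
        Polynomial.eval_pow, Polynomial.eval_X]
      rw [neg_one_geom_sum, if_neg (Nat.not_even_iff_odd.mpr ho)]
    rw [hv]; exact one_ne_zero

/-- the virtual equivariant multiplicity is a polynomial if and only if
δ ≥ (3 n0 n1 − 2⌊n/2⌋² − ⌊n/2⌋)(g−1). -/
theorem stmt6 (n0 n1 g : ℕ) (hn1 : 1 ≤ n1) (hn01 : n1 ≤ n0) (hg : 2 ≤ g)
    (δ : ℤ) (n : ℕ) (hn : n = n0 + n1)
    (hδlow : (n1 : ℤ) * ((n0 : ℤ) - n1) * ((g : ℤ) - 1) ≤ δ)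
    (hδhigh : δ ≤ 2 * (n0 : ℤ) * n1 * ((g : ℤ) - 1))
    (D1 D2 : ℤ)
    (hD1 : D1 = ((n0 : ℤ) ^ 2 + (n1 : ℤ) ^ 2 - n0 * n1) * ((g : ℤ) - 1) + 1 + δ)
    (hD2 : D2 = 3 * (n0 : ℤ) * n1 * ((g : ℤ) - 1) - δ)
    (m : RatFunc ℚ)
    (hm : m = ((1 : RatFunc ℚ) - RatFunc.X) ^ (g : ℤ) *
        (∏ i ∈ Finset.Icc 2 n,
          ((1 : RatFunc ℚ) - RatFunc.X ^ i) ^ (((2 * i - 1) * (g - 1) : ℕ) : ℤ)) *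
        ((1 : RatFunc ℚ) - RatFunc.X) ^ (-(D1 + D2)) *
        ((1 : RatFunc ℚ) + RatFunc.X) ^ (-D2)) :
    ((∃ q : Polynomial ℚ, m = algebraMap (Polynomial ℚ) (RatFunc ℚ) q) ↔
        (3 * (n0 : ℤ) * n1 - 2 * ((n / 2 : ℕ) : ℤ) ^ 2 - ((n / 2 : ℕ) : ℤ)) *
          ((g : ℤ) - 1) ≤ δ) ∧
    (¬ (∃ q : Polynomial ℚ, m = algebraMap (Polynomial ℚ) (RatFunc ℚ) q) ↔
        δ < (3 * (n0 : ℤ) * n1 - 2 * ((n / 2 : ℕ) : ℤ) ^ 2 - ((n / 2 : ℕ) : ℤ)) *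
          ((g : ℤ) - 1)) := by
  have hn2 : 2 ≤ n := by omega
  set φ : Polynomial ℚ →+* RatFunc ℚ := (algebraMap (Polynomial ℚ) (RatFunc ℚ)) with hφ
  set u : RatFunc ℚ := 1 - RatFunc.X with hudef
  set v : RatFunc ℚ := 1 + RatFunc.X with hvdef
  have hu : u = φ (1 - Polynomial.X) := by
    rw [map_sub, map_one, RatFunc.algebraMap_X]
  have hv : v = φ (1 + Polynomial.X) := by
    rw [map_add, map_one, RatFunc.algebraMap_X]
  have hu0 : u ≠ 0 := by
    rw [hu]
    rw [Ne, FaithfulSMul.algebraMap_eq_zero_iff]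
    intro hc
    have := congrArg (Polynomial.eval 0) hc
    simp at this
  have hv0 : v ≠ 0 := by
    rw [hv]
    rw [Ne, FaithfulSMul.algebraMap_eq_zero_iff]
    intro hc
    have := congrArg (Polynomial.eval 0) hc
    simp at this
  -- the polynomial part
  set p : Polynomial ℚ := ∏ i ∈ Finset.Icc 2 n, (sPoly i) ^ ((2*i-1)*(g-1)) with hpdef
  set A : ℕ := ∑ i ∈ Finset.Icc 2 n, (2*i-1)*(g-1) with hAdef
  set B : ℕ := ∑ i ∈ Finset.Icc 2 n, (if Even i then 1 else 0) * ((2*i-1)*(g-1)) with hBdef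
  have step1 : ∀ i ∈ Finset.Icc 2 n,
      ((1 : RatFunc ℚ) - RatFunc.X ^ i) ^ (((2 * i - 1) * (g - 1) : ℕ) : ℤ)
        = u ^ ((2*i-1)*(g-1)) * v ^ ((if Even i then 1 else 0) * ((2*i-1)*(g-1)))
            * φ ((sPoly i) ^ ((2*i-1)*(g-1))) := by
    intro i _
    rw [zpow_natCast]
    have hbase : (1 : RatFunc ℚ) - RatFunc.X ^ i = φ (1 - Polynomial.X ^ i) := by
      rw [map_sub, map_one, map_pow, RatFunc.algebraMap_X]
    rw [hbase, sPoly_factor i, map_mul, map_mul, map_pow, ← hu, ← hv, mul_pow, mul_pow,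
      ← pow_mul, map_pow]
  have hprod : (∏ i ∈ Finset.Icc 2 n,
      ((1 : RatFunc ℚ) - RatFunc.X ^ i) ^ (((2 * i - 1) * (g - 1) : ℕ) : ℤ))
        = u ^ A * v ^ B * φ p := by
    rw [Finset.prod_congr rfl step1, Finset.prod_mul_distrib, Finset.prod_mul_distrib,
      Finset.prod_pow_eq_pow_sum, Finset.prod_pow_eq_pow_sum, ← map_prod]
  -- exponent computations
  have hA_nat : A = (n^2 - 1)*(g-1) := by
    rw [hAdef, ← Finset.sum_mul, aux_sum1]
  have hB_nat : B = (2*(n/2)^2 + n/2)*(g-1) := by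
    have h1 : B = ∑ i ∈ Finset.Icc 2 n, (if Even i then 2*i-1 else 0) * (g-1) := by
      refine Finset.sum_congr rfl fun i _ => ?_
      split <;> simp
    rw [h1, ← Finset.sum_mul, aux_sum2]
  have hA : (A : ℤ) = ((n:ℤ)^2 - 1) * ((g:ℤ) - 1) := by
    have h1 : 1 ≤ n^2 := Nat.one_le_pow _ _ (by omega)
    have h2 : 1 ≤ g := by omega
    rw [hA_nat, Nat.cast_mul, Nat.cast_sub h1, Nat.cast_sub h2]
    push_cast
    ring
  have hB : (B : ℤ) = (2*((n/2 : ℕ):ℤ)^2 + ((n/2 : ℕ):ℤ)) * ((g:ℤ) - 1) := by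
    have h2 : 1 ≤ g := by omega
    rw [hB_nat, Nat.cast_mul, Nat.cast_sub h2]
    push_cast
    ring
  have hnz : (n:ℤ) = (n0:ℤ) + (n1:ℤ) := by rw [hn]; push_cast; ring
  have hexp0 : (g:ℤ) + (A:ℤ) - (D1+D2) = 0 := by
    rw [hA, hD1, hD2, hnz]; ring
  set E : ℤ := (B:ℤ) - D2 with hEdef
  have hE : E = δ - (3 * (n0 : ℤ) * n1 - 2 * ((n / 2 : ℕ) : ℤ) ^ 2 - ((n / 2 : ℕ) : ℤ)) *
      ((g : ℤ) - 1) := by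
    rw [hEdef, hB, hD2]; ring
  -- key form of m
  have key : m = v ^ E * φ p := by
    rw [hm, hprod]
    rw [show (u : RatFunc ℚ)^A = u^(A:ℤ) from (zpow_natCast u A).symm,
      show (v : RatFunc ℚ)^B = v^(B:ℤ) from (zpow_natCast v B).symm]
    have : u ^ (g:ℤ) * (u ^ (A:ℤ) * v ^ (B:ℤ) * φ p) * u ^ (-(D1 + D2)) * v ^ (-D2)
        = u ^ ((g:ℤ) + (A:ℤ) + (-(D1+D2))) * (v ^ ((B:ℤ) + (-D2)) * φ p) := by
      rw [zpow_add₀ hu0, zpow_add₀ hu0, zpow_add₀ hv0]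
      ring
    rw [this, show (g:ℤ) + (A:ℤ) + (-(D1+D2)) = 0 by omega, zpow_zero, one_mul,
      show (B:ℤ) + (-D2) = E by rw [hEdef]; ring]
  -- p is nonzero at -1
  have hp0 : p.eval (-1) ≠ 0 := by
    rw [hpdef, Polynomial.eval_prod]
    rw [Finset.prod_ne_zero_iff]
    intro i hi
    rw [Polynomial.eval_pow]
    exact pow_ne_zero _ (sPoly_eval i (Finset.mem_Icc.mp hi).1)
  -- main equivalence
  have main : (∃ q : Polynomial ℚ, m = φ q) ↔ 0 ≤ E := by
    constructor
    · rintro ⟨q, hq⟩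
      by_contra hE'
      push_neg at hE'
      set d : ℕ := (-E).toNat with hddef
      have hd : (d : ℤ) = -E := Int.toNat_of_nonneg (by omega)
      have hd1 : d ≠ 0 := by omega
      have h1 : φ p = φ (q * (1 + Polynomial.X) ^ d) := by
        rw [map_mul, map_pow, ← hv, ← hq, key]
        rw [show ((v : RatFunc ℚ)^d) = v^(d:ℤ) from (zpow_natCast v d).symm, hd,
          mul_comm (v ^ E) (φ p), mul_assoc, ← zpow_add₀ hv0]
        simp
      have h2 : p = q * (1 + Polynomial.X) ^ d := RatFunc.algebraMap_injective ℚ h1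
      have h3 := congrArg (Polynomial.eval (-1 : ℚ)) h2
      simp [zero_pow hd1] at h3
      exact hp0 h3
    · intro h
      refine ⟨p * (1 + Polynomial.X) ^ E.toNat, ?_⟩
      rw [key, map_mul, map_pow, ← hv,
        show ((v : RatFunc ℚ) ^ E.toNat) = v ^ ((E.toNat : ℕ) : ℤ) from
          (zpow_natCast v E.toNat).symm,
        Int.toNat_of_nonneg h, mul_comm]
  have iff1 : (∃ q : Polynomial ℚ, m = φ q) ↔
      (3 * (n0 : ℤ) * n1 - 2 * ((n / 2 : ℕ) : ℤ) ^ 2 - ((n / 2 : ℕ) : ℤ)) *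
          ((g : ℤ) - 1) ≤ δ := by
    rw [main, hE]
    constructor <;> intro h' <;> linarith
  exact ⟨iff1, (not_iff_not.mpr iff1).trans not_le⟩
end

section
/- For every integer n ≥ 4 one has 3·(n−1) − 2·⌊n/2⌋² − ⌊n/2⌋ ≤ n − 2. Consequently, for (n0, n1) := (n−1, 1) and any integer g ≥ 2, there is no integer δ satisfying both n1·(n0−n1)·(g−1) < δ and δ < (3·n0·n1 − 2·⌊n/2⌋² − ⌊n/2⌋)·(g−1). -/
/-- for partitions (n−1,1) with n ≥ 4 the admissible range for δ never
meets the non-polynomiality range of the virtual equivariant multiplicity. -/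
theorem stmt10 (n : ℕ) (hn : 4 ≤ n) :
    3 * ((n : ℤ) - 1) - 2 * ((n / 2 : ℕ) : ℤ) ^ 2 - ((n / 2 : ℕ) : ℤ) ≤ (n : ℤ) - 2 ∧
    ∀ g : ℤ, 2 ≤ g →
      ∀ n0 n1 : ℤ, n0 = (n : ℤ) - 1 → n1 = 1 →
        ¬ ∃ δ : ℤ, n1 * (n0 - n1) * (g - 1) < δ ∧
            δ < (3 * n0 * n1 - 2 * ((n / 2 : ℕ) : ℤ) ^ 2 - ((n / 2 : ℕ) : ℤ)) * (g - 1) := by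
  have h1 : n ≤ 2 * (n / 2) + 1 := by omega
  have h2 : 2 ≤ n / 2 := by omega
  have h1' : (n : ℤ) ≤ 2 * ((n / 2 : ℕ) : ℤ) + 1 := by exact_mod_cast h1
  have h2' : (2 : ℤ) ≤ ((n / 2 : ℕ) : ℤ) := by exact_mod_cast h2
  have key : 3 * ((n : ℤ) - 1) - 2 * ((n / 2 : ℕ) : ℤ) ^ 2 - ((n / 2 : ℕ) : ℤ) ≤ (n : ℤ) - 2 := by
    nlinarith [sq_nonneg (((n / 2 : ℕ) : ℤ) - 2)]
  refine ⟨key, ?_⟩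
  rintro g hg n0 n1 rfl rfl ⟨δ, hlo, hhi⟩
  have hg1 : (0 : ℤ) ≤ g - 1 := by linarith
  have : (3 * ((n : ℤ) - 1) * 1 - 2 * ((n / 2 : ℕ) : ℤ) ^ 2 - ((n / 2 : ℕ) : ℤ)) * (g - 1)
      ≤ ((n : ℤ) - 2) * (g - 1) := by
    apply mul_le_mul_of_nonneg_right _ hg1
    linarith
  nlinarith
end

section
/- Let n ≥ 2, n0 and i be natural numbers with n ≤ 2·n0, n0 ≤ n − 1, and 1 ≤ i ≤ n − 1. Then C(n−i, 2) + n0 · C(n−1, n−i−1) ≤ C(n, 2) · C(n−1, n−i−1), where C(a,b) denotes the binomial coefficient. Equivalently, the rational number w_i defined by the equation C(n−i,2) − C(n,2)·C(n−1, n−i−1) = −n0·C(n−1, n−1−i) + (n−i)·C(n, n−i)·w_i satisfies w_i ≤ 0. -/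
/-- the binomial inequality implying non-positivity of the normalized
weight w_i in Proposition 7.1. -/
theorem stmt11 (n n0 i : ℕ) (hn : 2 ≤ n) (hn0 : n ≤ 2 * n0) (hn0' : n0 ≤ n - 1)
    (hi1 : 1 ≤ i) (hi2 : i ≤ n - 1) :
    Nat.choose (n - i) 2 + n0 * Nat.choose (n - 1) (n - i - 1) ≤
      Nat.choose n 2 * Nat.choose (n - 1) (n - i - 1) ∧
    ∀ w : ℚ,
      ((Nat.choose (n - i) 2 : ℚ) - (Nat.choose n 2 : ℚ) * (Nat.choose (n - 1) (n - i - 1) : ℚ)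
          = -(n0 : ℚ) * (Nat.choose (n - 1) (n - 1 - i) : ℚ) +
            ((n : ℚ) - i) * (Nat.choose n (n - i) : ℚ) * w) →
        w ≤ 0 := by
  have hin : i < n := by omega
  have hc1 : 1 ≤ Nat.choose (n - 1) (n - i - 1) := Nat.choose_pos (by omega)
  have hA : Nat.choose (n - i) 2 ≤ Nat.choose (n - 1) 2 :=
    Nat.choose_le_choose 2 (by omega)
  have hsplit : Nat.choose n 2 = Nat.choose (n - 1) 1 + Nat.choose (n - 1) 2 := by
    conv_lhs => rw [show n = (n - 1) + 1 by omega]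
    rw [Nat.choose_succ_succ]
  have hB : Nat.choose (n - 1) 2 + n0 ≤ Nat.choose n 2 := by
    rw [hsplit, Nat.choose_one_right]; omega
  have h1 : Nat.choose (n - i) 2 + n0 * Nat.choose (n - 1) (n - i - 1) ≤
      Nat.choose n 2 * Nat.choose (n - 1) (n - i - 1) := by
    nlinarith [hc1, hA, hB]
  refine ⟨h1, ?_⟩
  intro w hw
  have heq : n - 1 - i = n - i - 1 := by omega
  rw [heq] at hw
  have hcast : ((n : ℚ) - i) = ((n - i : ℕ) : ℚ) := by
    rw [Nat.cast_sub hin.le]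
  rw [hcast] at hw
  have hpos : (0 : ℚ) < ((n - i : ℕ) : ℚ) * (Nat.choose n (n - i) : ℚ) := by
    have : 0 < (n - i) * Nat.choose n (n - i) :=
      Nat.mul_pos (by omega) (Nat.choose_pos (by omega))
    exact_mod_cast this
  have h1' : (Nat.choose (n - i) 2 : ℚ) + (n0 : ℚ) * (Nat.choose (n - 1) (n - i - 1) : ℚ) ≤
      (Nat.choose n 2 : ℚ) * (Nat.choose (n - 1) (n - i - 1) : ℚ) := by
    exact_mod_cast h1
  nlinarith [hpos, h1', hw]
end
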